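/- For any integer k, nonnegative integers n and r, B_n^{(k)}(x) = \sum_{m=0}^{n} \left\{ \binom{n}{m} \sum_{l=0}^{n-m} \frac{r! (n-m)_l}{(l+r)!} S_2(l+r, r) B_{n-l-m}^{(k)} \right\} \mathbb{B}_m^{(r)}(x), where (a)_l = a(a-1)\cdots(a-l+1) is the falling factorial and \mathbb{B}_m^{(r)}(x) are Bernoulli polynomials of order r. -/

import Mathlib

open PowerSeries Finset Nat

/-- The formal power series `e^{-t}`. -/
noncomputable def expNeg : PowerSeries ℂ := PowerSeries.rescale (-1) (PowerSeries.exp ℂ)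

/-- The generating function `Li_k(1-e^{-t})/(1-e^{-t}) = ∑_{m≥0} (1-e^{-t})^m/(m+1)^k`,
given coefficientwise (the sum truncates since `(1-e^{-t})^m` has order `≥ m`). -/
noncomputable def polyBernoulliGF (k : ℤ) : PowerSeries ℂ :=
  PowerSeries.mk fun n => ∑ m ∈ Finset.range (n + 1),
    (((m : ℂ) + 1) ^ k)⁻¹ * PowerSeries.coeff n ((1 - expNeg) ^ m)

/-- The poly-Bernoulli polynomial `B_n^{(k)}(x)`, defined by
`Li_k(1-e^{-t})/(1-e^{-t}) · e^{xt} = ∑ B_n^{(k)}(x) tⁿ/n!`. -/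
noncomputable def polyBernoulli (k : ℤ) (n : ℕ) (x : ℂ) : ℂ :=
  (n ! : ℂ) * PowerSeries.coeff n
    (polyBernoulliGF k * PowerSeries.mk fun j => x ^ j / (j ! : ℂ))

/-- Stirling numbers of the second kind, via `(e^t-1)^m = m! ∑_{l} S₂(l,m) t^l/l!`. -/
noncomputable def stirling2 (l m : ℕ) : ℂ :=
  (l ! : ℂ) / (m ! : ℂ) * PowerSeries.coeff l ((PowerSeries.exp ℂ - 1) ^ m)

/-- Bernoulli polynomials of order `r`: `(t/(e^t-1))^r e^{xt} = ∑ 𝔹_n^{(r)}(x) tⁿ/n!`,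
using that `(e^t-1)/t = ∑ tʲ/(j+1)!` is invertible. -/
noncomputable def bernoulliHigher (r n : ℕ) (x : ℂ) : ℂ :=
  (n ! : ℂ) * PowerSeries.coeff n
    (((PowerSeries.mk fun j => (1 : ℂ) / ((j + 1)! : ℂ))⁻¹) ^ r *
      PowerSeries.mk fun j => x ^ j / (j ! : ℂ))

/-- Euler polynomials of order `r`: `(2/(e^t+1))^r e^{xt} = ∑ E_n^{(r)}(x) tⁿ/n!`. -/
noncomputable def eulerHigher (r n : ℕ) (x : ℂ) : ℂ :=
  (n ! : ℂ) * PowerSeries.coeff n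
    ((((1 + PowerSeries.exp ℂ) * PowerSeries.C (1 / 2))⁻¹) ^ r *
      PowerSeries.mk fun j => x ^ j / (j ! : ℂ))

/-- Frobenius-Euler polynomials of order `r`:
`((1-λ)/(e^t-λ))^r e^{xt} = ∑ H_n^{(r)}(x|λ) tⁿ/n!`. -/
noncomputable def frobeniusEuler (lam : ℂ) (r n : ℕ) (x : ℂ) : ℂ :=
  (n ! : ℂ) * PowerSeries.coeff n
    ((((PowerSeries.exp ℂ - PowerSeries.C lam) * PowerSeries.C (1 - lam)⁻¹)⁻¹) ^ r *
      PowerSeries.mk fun j => x ^ j / (j ! : ℂ))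

/-! The generating function of `B_n^{(k)}(x)` factors as `(t/(e^t-1))^r e^{xt} · ((e^t-1)/t)^r F_k(t)`,
where `F_k` is the generating function of `B_n^{(k)}`. The first factor generates `𝔹_m^{(r)}(x)`; the
coefficients of `((e^t-1)/t)^r` are `r! S₂(l+r, r)/(l+r)!`, so comparing coefficients of `tⁿ/n!`
gives the identity. -/

noncomputable def expSubOneDivX (K : Type*) [Field K] : PowerSeries K :=
  PowerSeries.mk fun j => (1 : K) / ((j + 1)! : K)

section ExpSubOneDivX

variable {K : Type*} [Field K]

theorem exp_sub_one_eq_X_mul_expSubOneDivX [CharZero K] : exp K - 1 = X * expSubOneDivX K := by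
  ext j
  cases j with
  | zero => simp
  | succ j => simp [expSubOneDivX, coeff_exp, coeff_succ_X_mul]

theorem expSubOneDivX_mul_inv : expSubOneDivX K * (expSubOneDivX K)⁻¹ = 1 :=
  PowerSeries.mul_inv_cancel _ (by simp [expSubOneDivX])

end ExpSubOneDivX

theorem coeff_expSubOneDivX_pow (r l : ℕ) :
    coeff l (expSubOneDivX ℂ ^ r) = (r ! : ℂ) / ((l + r)! : ℂ) * stirling2 (l + r) r := by
  have hr : (r ! : ℂ) ≠ 0 := Nat.cast_ne_zero.mpr r.factorial_ne_zero
  have hlr : ((l + r)! : ℂ) ≠ 0 := Nat.cast_ne_zero.mpr (l + r).factorial_ne_zero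
  rw [stirling2, exp_sub_one_eq_X_mul_expSubOneDivX, mul_pow, coeff_X_pow_mul]
  field_simp

theorem factorial_mul_coeff_mul {R : Type*} [CommSemiring R] (f g : PowerSeries R) (n : ℕ) :
    (n ! : R) * coeff n (f * g) = ∑ m ∈ range (n + 1),
      (n.choose m : R) * ((m ! : R) * coeff m f) * (((n - m)! : R) * coeff (n - m) g) := by
  rw [coeff_mul, Nat.sum_antidiagonal_eq_sum_range_succ_mk, mul_sum]
  refine sum_congr rfl fun m hm => ?_
  have hfac : (n.choose m : R) * m ! * (n - m)! = n ! := by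
    rw [← Nat.cast_mul, ← Nat.cast_mul,
      Nat.choose_mul_factorial_mul_factorial (Nat.lt_succ_iff.mp (mem_range.mp hm))]
  rw [← hfac]
  ring

theorem polyBernoulli_zero (k : ℤ) (n : ℕ) :
    polyBernoulli k n 0 = (n ! : ℂ) * coeff n (polyBernoulliGF k) := by
  have hexp : (PowerSeries.mk fun j => (0 : ℂ) ^ j / (j ! : ℂ)) = 1 := by
    ext j
    cases j <;> simp [coeff_one]
  rw [polyBernoulli, hexp, mul_one]

theorem bernoulliHigher_eq (r n : ℕ) (x : ℂ) :
    bernoulliHigher r n x = (n ! : ℂ) * coeff n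
      ((expSubOneDivX ℂ)⁻¹ ^ r * PowerSeries.mk fun j => x ^ j / (j ! : ℂ)) :=
  rfl

theorem factorial_mul_coeff_expSubOneDivX_pow_mul_polyBernoulliGF (k : ℤ) (r n : ℕ) :
    (n ! : ℂ) * coeff n (expSubOneDivX ℂ ^ r * polyBernoulliGF k) =
      ∑ l ∈ range (n + 1), (r ! : ℂ) * (n.descFactorial l : ℂ) / ((l + r)! : ℂ) *
        stirling2 (l + r) r * polyBernoulli k (n - l) 0 := by
  rw [coeff_mul, Nat.sum_antidiagonal_eq_sum_range_succ_mk, mul_sum]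
  refine sum_congr rfl fun l hl => ?_
  have hfac : ((n - l)! : ℂ) * n.descFactorial l = n ! := by
    exact_mod_cast Nat.factorial_mul_descFactorial (Nat.lt_succ_iff.mp (mem_range.mp hl))
  rw [coeff_expSubOneDivX_pow, polyBernoulli_zero, ← hfac]
  ring

theorem polyBernoulli_eq_sum_bernoulliHigher (k : ℤ) (n r : ℕ) (x : ℂ) :
    polyBernoulli k n x =
      ∑ m ∈ Finset.range (n + 1),
        ((n.choose m : ℂ) * ∑ l ∈ Finset.range (n - m + 1),
          (r ! : ℂ) * ((n - m).descFactorial l : ℂ) / ((l + r)! : ℂ) *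
            stirling2 (l + r) r * polyBernoulli k (n - l - m) 0) *
          bernoulliHigher r m x := by
  set E := PowerSeries.mk fun j => x ^ j / (j ! : ℂ)
  have hsplit : polyBernoulliGF k * E =
      ((expSubOneDivX ℂ)⁻¹ ^ r * E) * (expSubOneDivX ℂ ^ r * polyBernoulliGF k) := by
    calc polyBernoulliGF k * E
        = (expSubOneDivX ℂ * (expSubOneDivX ℂ)⁻¹) ^ r * (polyBernoulliGF k * E) := by
          rw [expSubOneDivX_mul_inv, one_pow, one_mul]
      _ = _ := by ring
  rw [polyBernoulli, hsplit, factorial_mul_coeff_mul]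
  refine sum_congr rfl fun m _ => ?_
  simp_rw [Nat.sub_right_comm n _ m]
  rw [← factorial_mul_coeff_expSubOneDivX_pow_mul_polyBernoulliGF, ← bernoulliHigher_eq]
  ring
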